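/- Let C be a distributive category (finite products and coproducts with the canonical map (A×B)+(A×C) → A×(B+C) invertible) and let P : C^op → Lat be a lat-doctrine such that for all objects A,B the image P_{j_A} of the coproduct injection j_A : A → A+B has a left adjoint ∃_{j_A} satisfying Beck–Chevalley. Then for every object A the fibre P^ex(A) of the existential completion has binary joins, given by (A,B,α) ∨ (A,C,β) = (A, B+C, P_{θ^{-1}}(∃_{j_{A×B}}(α) ∨ ∃_{j_{A×C}}(β))), where θ : (A×B)+(A×C) → A×(B+C) is the canonical distributivity isomorphism. -/

import Mathlib

open CategoryTheory CategoryTheory.Limits Opposite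

universe u v

variable {C : Type u} [Category.{v} C] [HasFiniteProducts C]

/-- The fibre of a slat-doctrine `P : Cᵒᵖ ⥤ Pos` over an object `X` of `C`. -/
abbrev Fib (P : Cᵒᵖ ⥤ PartOrd) (X : C) : Type _ := (P.obj (op X) : Type _)

/-- Reindexing along `f : X ⟶ Y` (the monotone map `P f : P Y → P X`). -/
def rIdx (P : Cᵒᵖ ⥤ PartOrd) {X Y : C} (f : X ⟶ Y) (a : Fib P Y) : Fib P X :=
  (P.map f.op).hom.toFun a

/-- Objects of the fibre of a quantifier completion over `A`: triples `(A, B, α)`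
with `α ∈ P (A × B)` (the component `A` being fixed). -/
abbrev QObj (P : Cᵒᵖ ⥤ PartOrd) (A : C) : Type _ := Σ B : C, Fib P (A ⨯ B)

/-- The order of the universal completion `P^un`:
`(A,B,α) ≤ (A,C,γ)` iff there is `g : A×C ⟶ B` with `P⟨pr_A,g⟩(α) ≤ γ`. -/
def UnLe (P : Cᵒᵖ ⥤ PartOrd) {A : C} (x y : QObj P A) : Prop :=
  ∃ g : A ⨯ y.1 ⟶ x.1, rIdx P (prod.lift prod.fst g) x.2 ≤ y.2

/-- The order of the existential completion `P^ex`: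
`(A,B,α) ≤ (A,C,γ)` iff there is `f : A×B ⟶ C` with `α ≤ P⟨pr_A,f⟩(γ)`. -/
def ExLe (P : Cᵒᵖ ⥤ PartOrd) {A : C} (x y : QObj P A) : Prop :=
  ∃ f : A ⨯ x.1 ⟶ y.1, x.2 ≤ rIdx P (prod.lift prod.fst f) y.2

/-- Reindexing of the completions along `f : X ⟶ Y`: `(Y,D,δ) ↦ (X,D,P_{f×1}(δ))`. -/
noncomputable def QReindex (P : Cᵒᵖ ⥤ PartOrd) {X Y : C} (f : X ⟶ Y) (y : QObj P Y) :
    QObj P X :=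
  ⟨y.1, rIdx P (prod.map f (𝟙 y.1)) y.2⟩

variable [HasBinaryCoproducts C]

/-- The canonical distributivity map `(A×B)+(A×C) ⟶ A×(B+C)`. -/
noncomputable def distL (A B Cc : C) : (A ⨯ B) ⨿ (A ⨯ Cc) ⟶ A ⨯ (B ⨿ Cc) :=
  coprod.desc (prod.map (𝟙 A) coprod.inl) (prod.map (𝟙 A) coprod.inr)

/-- The canonical distributivity map `(A×D)+(B×D) ⟶ (A+B)×D`. -/
noncomputable def distR (A B D : C) : (A ⨯ D) ⨿ (B ⨯ D) ⟶ (A ⨿ B) ⨯ D :=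
  coprod.desc (prod.map coprod.inl (𝟙 D)) (prod.map coprod.inr (𝟙 D))

/-!
By distributivity a predicate over `B+C` is the same as one over `(A×B)+(A×C)`, and there
`∃_{j_{A×B}} α ∨ ∃_{j_{A×C}} β` is the least predicate whose restrictions to the two summands lie
above `α` and `β`. The witnesses `⟨pr_A, j ∘ pr_B⟩` of the upper bounds and the copairing
`[f, g] ∘ θ⁻¹` of two witnesses all commute with the first projection, which is exactly what the
order of `P^ex(A)` asks of its morphisms.
-/

section reindexing

omit [HasFiniteProducts C] [HasBinaryCoproducts C]

variable (P : Cᵒᵖ ⥤ PartOrd)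

lemma rIdx_comp {X Y Z : C} (f : X ⟶ Y) (g : Y ⟶ Z) (a : Fib P Z) :
    rIdx P (f ≫ g) a = rIdx P f (rIdx P g a) := by
  simp only [rIdx, op_comp, Functor.map_comp]
  rfl

lemma rIdx_mono {X Y : C} (f : X ⟶ Y) : Monotone (rIdx P f) :=
  (P.map f.op).hom.monotone

lemma rIdx_id (X : C) (a : Fib P X) : rIdx P (𝟙 X) a = a := by
  simp [rIdx]

lemma rIdx_inv_le_iff {X Y : C} (e : X ⟶ Y) [IsIso e]
    (a : Fib P X) (b : Fib P Y) : rIdx P (inv e) a ≤ b ↔ a ≤ rIdx P e b := by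
  constructor
  · intro h
    simpa only [← rIdx_comp, IsIso.hom_inv_id, rIdx_id] using rIdx_mono P e h
  · intro h
    simpa only [← rIdx_comp, IsIso.inv_hom_id, rIdx_id] using rIdx_mono P (inv e) h

end reindexing

omit [HasBinaryCoproducts C] in
lemma prod_lift_fst_snd_comp {A B D : C} (h : B ⟶ D) :
    prod.lift prod.fst (prod.snd ≫ h) = prod.map (𝟙 A) h := by
  rw [← prod.lift_fst_comp_snd_comp, Category.comp_id]

lemma prod_lift_fst_snd_inl_comp_inv_distL (A B Cc : C) [IsIso (distL A B Cc)] :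
    prod.lift prod.fst (prod.snd ≫ coprod.inl) ≫ inv (distL A B Cc) = coprod.inl := by
  rw [IsIso.comp_inv_eq, prod_lift_fst_snd_comp, distL, coprod.inl_desc]

lemma prod_lift_fst_snd_inr_comp_inv_distL (A B Cc : C) [IsIso (distL A B Cc)] :
    prod.lift prod.fst (prod.snd ≫ coprod.inr) ≫ inv (distL A B Cc) = coprod.inr := by
  rw [IsIso.comp_inv_eq, prod_lift_fst_snd_comp, distL, coprod.inr_desc]

lemma distL_comp_prod_lift_fst_inv_distL_desc {A B Cc D : C} [IsIso (distL A B Cc)]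
    (f : A ⨯ B ⟶ D) (g : A ⨯ Cc ⟶ D) :
    distL A B Cc ≫ prod.lift prod.fst (inv (distL A B Cc) ≫ coprod.desc f g) =
      coprod.desc (prod.lift prod.fst f) (prod.lift prod.fst g) := by
  rw [prod.comp_lift, IsIso.hom_inv_id_assoc]
  apply coprod.hom_ext <;>
    simp only [prod.comp_lift, distL, coprod.inl_desc_assoc, coprod.inr_desc_assoc,
      coprod.inl_desc, coprod.inr_desc, prod.map_fst, Category.comp_id]

noncomputable def distObj (P : Cᵒᵖ ⥤ PartOrd) (A B Cc : C) [IsIso (distL A B Cc)]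
    (δ : Fib P ((A ⨯ B) ⨿ (A ⨯ Cc))) : QObj P A :=
  ⟨B ⨿ Cc, rIdx P (inv (distL A B Cc)) δ⟩

section distObj

variable (P : Cᵒᵖ ⥤ PartOrd) {A : C}

lemma exLe_distObj_of_le_rIdx_inl (x : QObj P A) {Cc : C} [IsIso (distL A x.1 Cc)]
    {δ : Fib P ((A ⨯ x.1) ⨿ (A ⨯ Cc))} (h : x.2 ≤ rIdx P coprod.inl δ) :
    ExLe P x (distObj P A x.1 Cc δ) := by
  have hle : x.2 ≤ rIdx P (prod.lift prod.fst (prod.snd ≫ coprod.inl))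
      (rIdx P (inv (distL A x.1 Cc)) δ) := by
    rwa [← rIdx_comp, prod_lift_fst_snd_inl_comp_inv_distL]
  exact ⟨_, hle⟩

lemma exLe_distObj_of_le_rIdx_inr (y : QObj P A) {B : C} [IsIso (distL A B y.1)]
    {δ : Fib P ((A ⨯ B) ⨿ (A ⨯ y.1))} (h : y.2 ≤ rIdx P coprod.inr δ) :
    ExLe P y (distObj P A B y.1 δ) := by
  have hle : y.2 ≤ rIdx P (prod.lift prod.fst (prod.snd ≫ coprod.inr))
      (rIdx P (inv (distL A B y.1)) δ) := by
    rwa [← rIdx_comp, prod_lift_fst_snd_inr_comp_inv_distL]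
  exact ⟨_, hle⟩

lemma exLe_distObj_of_le_rIdx_desc {B Cc : C} [IsIso (distL A B Cc)]
    {δ : Fib P ((A ⨯ B) ⨿ (A ⨯ Cc))} (z : QObj P A) (f : A ⨯ B ⟶ z.1) (g : A ⨯ Cc ⟶ z.1)
    (h : δ ≤ rIdx P (coprod.desc (prod.lift prod.fst f) (prod.lift prod.fst g)) z.2) :
    ExLe P (distObj P A B Cc δ) z := by
  have hle : rIdx P (inv (distL A B Cc)) δ ≤
      rIdx P (prod.lift prod.fst (inv (distL A B Cc) ≫ coprod.desc f g)) z.2 := by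
    rwa [rIdx_inv_le_iff, ← rIdx_comp, distL_comp_prod_lift_fst_inv_distL_desc]
  exact ⟨_, hle⟩

end distObj

theorem exCompletion_binary_joins_general (P : Cᵒᵖ ⥤ PartOrd)
    [hdist : ∀ A B Cc : C, IsIso (distL A B Cc)]
    (sup : ∀ X : C, Fib P X → Fib P X → Fib P X)
    (le_sup_left : ∀ (X : C) (a b : Fib P X), a ≤ sup X a b)
    (le_sup_right : ∀ (X : C) (a b : Fib P X), b ≤ sup X a b)
    (sup_le : ∀ (X : C) (a b c : Fib P X), a ≤ c → b ≤ c → sup X a b ≤ c)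
    (Einl : ∀ X Y : C, Fib P X → Fib P (X ⨿ Y))
    (Einr : ∀ X Y : C, Fib P Y → Fib P (X ⨿ Y))
    (adjl : ∀ (X Y : C) (a : Fib P X) (d : Fib P (X ⨿ Y)),
      Einl X Y a ≤ d ↔ a ≤ rIdx P coprod.inl d)
    (adjr : ∀ (X Y : C) (a : Fib P Y) (d : Fib P (X ⨿ Y)),
      Einr X Y a ≤ d ↔ a ≤ rIdx P coprod.inr d)
    (A : C) (x y : QObj P A) :
    let j : QObj P A :=
      ⟨x.1 ⨿ y.1,
        rIdx P (inv (distL A x.1 y.1))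
          (sup ((A ⨯ x.1) ⨿ (A ⨯ y.1))
            (Einl (A ⨯ x.1) (A ⨯ y.1) x.2) (Einr (A ⨯ x.1) (A ⨯ y.1) y.2))⟩
    ExLe P x j ∧ ExLe P y j ∧ ∀ z : QObj P A, ExLe P x z → ExLe P y z → ExLe P j z := by
  intro j
  refine ⟨exLe_distObj_of_le_rIdx_inl P x ?_, exLe_distObj_of_le_rIdx_inr P y ?_, ?_⟩
  · exact (adjl _ _ _ _).1 (le_sup_left _ _ _)
  · exact (adjr _ _ _ _).1 (le_sup_right _ _ _)
  rintro z ⟨f, hf⟩ ⟨g, hg⟩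
  refine exLe_distObj_of_le_rIdx_desc P z f g (sup_le _ _ _ _ ?_ ?_)
  · rwa [adjl, ← rIdx_comp, coprod.inl_desc]
  · rwa [adjr, ← rIdx_comp, coprod.inr_desc]

/-- Let `C` be distributive and `P` a lat-doctrine (fibrewise lattices, preserved by
reindexing) whose reindexings along coproduct injections have left adjoints `∃_j`
satisfying Beck–Chevalley.  Then each fibre `P^ex(A)` has binary joins, given by
`(A,B,α) ∨ (A,C,β) = (A, B+C, P_{θ⁻¹}(∃_{j_{A×B}}(α) ∨ ∃_{j_{A×C}}(β)))`. -/
theorem exCompletion_binary_joins (P : Cᵒᵖ ⥤ PartOrd)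
    [hdist : ∀ A B Cc : C, IsIso (distL A B Cc)]
    (sup : ∀ X : C, Fib P X → Fib P X → Fib P X)
    (le_sup_left : ∀ (X : C) (a b : Fib P X), a ≤ sup X a b)
    (le_sup_right : ∀ (X : C) (a b : Fib P X), b ≤ sup X a b)
    (sup_le : ∀ (X : C) (a b c : Fib P X), a ≤ c → b ≤ c → sup X a b ≤ c)
    (hsup : ∀ {X Y : C} (f : X ⟶ Y) (a b : Fib P Y),
      rIdx P f (sup Y a b) = sup X (rIdx P f a) (rIdx P f b))
    (inf : ∀ X : C, Fib P X → Fib P X → Fib P X)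
    (inf_le_left : ∀ (X : C) (a b : Fib P X), inf X a b ≤ a)
    (inf_le_right : ∀ (X : C) (a b : Fib P X), inf X a b ≤ b)
    (le_inf : ∀ (X : C) (c a b : Fib P X), c ≤ a → c ≤ b → c ≤ inf X a b)
    (hinf : ∀ {X Y : C} (f : X ⟶ Y) (a b : Fib P Y),
      rIdx P f (inf Y a b) = inf X (rIdx P f a) (rIdx P f b))
    (Einl : ∀ X Y : C, Fib P X → Fib P (X ⨿ Y))
    (Einr : ∀ X Y : C, Fib P Y → Fib P (X ⨿ Y))
    (adjl : ∀ (X Y : C) (a : Fib P X) (d : Fib P (X ⨿ Y)),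
      Einl X Y a ≤ d ↔ a ≤ rIdx P coprod.inl d)
    (adjr : ∀ (X Y : C) (a : Fib P Y) (d : Fib P (X ⨿ Y)),
      Einr X Y a ≤ d ↔ a ≤ rIdx P coprod.inr d)
    (bcl : ∀ {X X' Y Y' : C} (f : X ⟶ X') (g : Y ⟶ Y') (a : Fib P X'),
      Einl X Y (rIdx P f a) = rIdx P (coprod.map f g) (Einl X' Y' a))
    (bcr : ∀ {X X' Y Y' : C} (f : X ⟶ X') (g : Y ⟶ Y') (a : Fib P Y'),
      Einr X Y (rIdx P g a) = rIdx P (coprod.map f g) (Einr X' Y' a))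
    (A : C) (x y : QObj P A) :
    let j : QObj P A :=
      ⟨x.1 ⨿ y.1,
        rIdx P (inv (distL A x.1 y.1))
          (sup ((A ⨯ x.1) ⨿ (A ⨯ y.1))
            (Einl (A ⨯ x.1) (A ⨯ y.1) x.2) (Einr (A ⨯ x.1) (A ⨯ y.1) y.2))⟩
    ExLe P x j ∧ ExLe P y j ∧ ∀ z : QObj P A, ExLe P x z → ExLe P y z → ExLe P j z :=
  exCompletion_binary_joins_general P (hdist := hdist) sup le_sup_left le_sup_right sup_le Einl Einr
    adjl adjr A x y
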